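/- For a linear character l of H, the character l^{⊗n} of the diagonal subgroup H^n ≤ G_n(G,H) is invariant under conjugation by G_n(G,H), i.e. G_n(G,H) centralizes the character l^{⊗n}, so l^{⊗n} extends to a one-dimensional representation of G_n(G,H) that is trivial on a set of coset representatives of H^n coming from G_n(G/H,1). -/

import Mathlib

open SemidirectProduct

/-- The action of permutations of `ι` on `ι → G` by permuting coordinates. -/
def permAut (ι G : Type*) [Group G] : Equiv.Perm ι →* MulAut (ι → G) where
  toFun σ := { Equiv.arrowCongr σ (Equiv.refl G) with
               map_mul' := fun f g => rfl }
  map_one' := by ext f i; rfl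
  map_mul' σ τ := by ext f i; rfl

/-- The wreath product `S_ι[G]`, a model for the group of monomial matrices
with rows/columns indexed by `ι` and nonzero entries in `G`. -/
abbrev Wreath (ι G : Type*) [Group G] := (ι → G) ⋊[permAut ι G] Equiv.Perm ι

@[simp] lemma permAut_apply {ι G : Type*} [Group G] (σ : Equiv.Perm ι) (f : ι → G) (i : ι) :
    permAut ι G σ f i = f (σ.symm i) := rfl

/-- The product of the nonzero entries of a monomial matrix. -/
def entryProdFun {ι G : Type*} [Fintype ι] [CommGroup G] (w : Wreath ι G) : G :=
  ∏ i, w.left i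

/-- The entry-product map as a monoid hom. -/
def entryProd (ι G : Type*) [Fintype ι] [CommGroup G] : Wreath ι G →* G where
  toFun := entryProdFun
  map_one' := by simp [entryProdFun]
  map_mul' a b := by
    simp only [entryProdFun, mul_left, Pi.mul_apply, Finset.prod_mul_distrib]
    congr 1
    exact Equiv.prod_comp a.right.symm fun i => b.left i

/-- `G_n(G, H)`: the subgroup of the wreath product consisting of monomial
matrices whose entries multiply to an element of `H`. -/
def GnSubgroup (n : ℕ) (G : Type*) [CommGroup G] (H : Subgroup G) :
    Subgroup (Wreath (Fin n) G) :=
  Subgroup.comap (entryProd (Fin n) G) H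

lemma mem_GnSubgroup {n : ℕ} {G : Type*} [CommGroup G] {H : Subgroup G}
    (w : Wreath (Fin n) G) : w ∈ GnSubgroup n G H ↔ (∏ i, w.left i) ∈ H := Iff.rfl

/-- The diagonal embedding of `H^n` into the wreath product. -/
def diagW {n : ℕ} {G : Type*} [CommGroup G] (H : Subgroup G) :
    (Fin n → ↥H) →* Wreath (Fin n) G :=
  SemidirectProduct.inl.comp
    (Pi.monoidHom fun i => H.subtype.comp (Pi.evalMonoidHom (fun _ => ↥H) i))

@[simp] lemma diagW_left {n : ℕ} {G : Type*} [CommGroup G] {H : Subgroup G}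
    (h : Fin n → ↥H) (i : Fin n) : (diagW H h).left i = (h i : G) := rfl

@[simp] lemma diagW_right {n : ℕ} {G : Type*} [CommGroup G] {H : Subgroup G}
    (h : Fin n → ↥H) : (diagW H h).right = 1 := rfl

lemma diagW_mem {n : ℕ} {G : Type*} [CommGroup G] (H : Subgroup G) (h : Fin n → ↥H) :
    diagW H h ∈ GnSubgroup n G H := by
  simp only [mem_GnSubgroup, diagW_left]
  exact_mod_cast (Submonoid.prod_mem H.toSubmonoid (fun i _ => (h i).2))

/-- The diagonal embedding of `H^n` into `G_n(G,H)`. -/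
def diagGn {n : ℕ} {G : Type*} [CommGroup G] (H : Subgroup G) :
    (Fin n → ↥H) →* ↥(GnSubgroup n G H) :=
  (diagW H).codRestrict _ (diagW_mem H)

/-- Entrywise reduction mod `H`, as a map of wreath products. -/
def reduceW (n : ℕ) (G : Type*) [CommGroup G] (H : Subgroup G) :
    Wreath (Fin n) G →* Wreath (Fin n) (G ⧸ H) :=
  SemidirectProduct.map
    (Pi.monoidHom fun i => (QuotientGroup.mk' H).comp (Pi.evalMonoidHom (fun _ => G) i))
    (MonoidHom.id _)
    (fun σ => by ext f i; rfl)

lemma reduceW_mem {n : ℕ} {G : Type*} [CommGroup G] (H : Subgroup G)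
    (w : ↥(GnSubgroup n G H)) : reduceW n G H w.1 ∈ GnSubgroup n (G ⧸ H) ⊥ := by
  have hw := w.2
  simp only [mem_GnSubgroup] at hw ⊢
  have : (∏ i, (reduceW n G H w.1).left i) = QuotientGroup.mk' H (∏ i, w.1.left i) := by
    rw [map_prod]; rfl
  rw [this, Subgroup.mem_bot]
  rw [QuotientGroup.mk'_apply, QuotientGroup.eq_one_iff]
  exact hw

/-- The reduction-mod-`H` homomorphism `φ : G_n(G,H) → G_n(G/H, 1)`. -/
def phiGn (n : ℕ) (G : Type*) [CommGroup G] (H : Subgroup G) :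
    ↥(GnSubgroup n G H) →* ↥(GnSubgroup n (G ⧸ H) ⊥) :=
  ((reduceW n G H).comp (GnSubgroup n G H).subtype).codRestrict _ (reduceW_mem H)

/-- The character `l^{⊗n}` of `H^n` associated to a character `l` of `H`. -/
def tensorChar {n : ℕ} {G : Type*} [CommGroup G] {H : Subgroup G}
    (l : ↥H →* ℂˣ) : (Fin n → ↥H) →* ℂˣ :=
  { toFun := fun h => ∏ i, l (h i)
    map_one' := by simp
    map_mul' := fun h h' => by simp [Finset.prod_mul_distrib] }

/-- The `l^{⊗n}`-isotypic component of the restriction to the diagonal `H^n` of a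
representation `ρ` of `G_n(G,H)`: the simultaneous eigenspace on which each
`diagGn H h` acts by the scalar `l^{⊗n}(h)`. -/
def isotypic {n : ℕ} {G : Type*} [CommGroup G] {H : Subgroup G}
    (l : ↥H →* ℂˣ) {V : Type*} [AddCommGroup V] [Module ℂ V]
    (ρ : Representation ℂ ↥(GnSubgroup n G H) V) : Submodule ℂ V :=
  ⨅ h : Fin n → ↥H, Module.End.eigenspace (ρ (diagGn H h)) ((tensorChar l h : ℂˣ) : ℂ)

/-- Irreducibility of a representation. -/
def IsIrred {k : Type*} [Field k] {Γ : Type*} [Group Γ] {V : Type*}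
    [AddCommGroup V] [Module k V] (ρ : Representation k Γ V) : Prop :=
  (∃ v : V, v ≠ 0) ∧
  ∀ W : Submodule k V, (∀ g : Γ, ∀ v ∈ W, ρ g v ∈ W) → W = ⊥ ∨ W = ⊤

/-- Equivalence (isomorphism) of representations. -/
def EquivRep {k : Type*} [Field k] {Γ : Type*} [Group Γ]
    {V V' : Type*} [AddCommGroup V] [Module k V] [AddCommGroup V'] [Module k V']
    (ρ : Representation k Γ V) (σ : Representation k Γ V') : Prop :=
  ∃ e : V ≃ₗ[k] V', ∀ (g : Γ) (v : V), e (ρ g v) = σ g (e v)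

/-- Twisting a representation by a one-dimensional character. -/
def smulRep {Γ : Type*} [Group Γ] {V : Type*} [AddCommGroup V] [Module ℂ V]
    (χ : Γ →* ℂˣ) (ρ : Representation ℂ Γ V) : Representation ℂ Γ V where
  toFun g := ((χ g : ℂ)) • ρ g
  map_one' := by simp
  map_mul' g g' := by
    ext v
    simp only [map_mul, LinearMap.smul_apply, Module.End.mul_apply, Units.val_mul,
      LinearMap.map_smul_of_tower, smul_smul, mul_comm]


/-- The complex reflection group `G(m,p,n)`: monomial matrices whose nonzero
entries are `m`-th roots of unity and whose entry product is an `m/p`-th root of unity. -/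
def Gmpn (m p n : ℕ) : Subgroup (Wreath (Fin n) ℂˣ) where
  carrier := {w | (∀ i, w.left i ^ m = 1) ∧ (∏ i, w.left i) ^ (m / p) = 1}
  one_mem' := by simp
  mul_mem' := by
    rintro a b ⟨ha1, ha2⟩ ⟨hb1, hb2⟩
    constructor
    · intro i
      simp only [mul_left, Pi.mul_apply, permAut_apply, mul_pow, ha1, hb1, one_mul]
    · have : (∏ i, (a * b).left i) = (∏ i, a.left i) * ∏ i, b.left i :=
        map_mul (entryProd (Fin n) ℂˣ) a b
      rw [this, mul_pow, ha2, hb2, one_mul]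
  inv_mem' := by
    rintro a ⟨ha1, ha2⟩
    constructor
    · intro i
      have : a⁻¹.left i = (a.left (a.right i))⁻¹ := by
        rw [SemidirectProduct.inv_left]; rfl
      rw [this, inv_pow, ha1, inv_one]
    · have : (∏ i, a⁻¹.left i) = (∏ i, a.left i)⁻¹ := map_inv (entryProd (Fin n) ℂˣ) a
      rw [this, inv_pow, ha2, inv_one]


lemma permCongr_perm_symm {α β : Type*} (e : α ≃ β) (p : Equiv.Perm α) :
    (e.permCongr p).symm = e.permCongr p.symm := by
  ext x; simp [Equiv.permCongr_def]

/-- The block-diagonal placement of a pair of monomial matrices. -/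
def blockDiagFun {G : Type*} [Group G] {k l : ℕ}
    (a : Wreath (Fin k) G) (b : Wreath (Fin l) G) : Wreath (Fin (k + l)) G :=
  ⟨fun i => Sum.elim a.left b.left (finSumFinEquiv.symm i),
   finSumFinEquiv.permCongr (Equiv.sumCongr a.right b.right)⟩

/-- The block-diagonal embedding as a group homomorphism on full wreath products. -/
def blockDiagHom (G : Type*) [Group G] (k l : ℕ) :
    Wreath (Fin k) G × Wreath (Fin l) G →* Wreath (Fin (k + l)) G where
  toFun p := blockDiagFun p.1 p.2
  map_one' := by
    apply SemidirectProduct.ext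
    · funext i
      rcases h : finSumFinEquiv.symm i with x | x <;>
        simp [blockDiagFun, h]
    · ext i
      simp [blockDiagFun, Equiv.permCongr]
  map_mul' p q := by
    apply SemidirectProduct.ext
    · funext i
      rcases h : finSumFinEquiv.symm i with x | x <;>
        simp [blockDiagFun, h, mul_left, permAut_apply, permCongr_perm_symm,
          Equiv.permCongr_apply, Equiv.symm_apply_apply, Equiv.sumCongr_symm,
          Equiv.sumCongr_apply, Sum.map]
    · ext i
      rcases h : finSumFinEquiv.symm i with x | x <;>
        simp [blockDiagFun, h, mul_right, Equiv.permCongr_apply, Equiv.symm_apply_apply,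
          Equiv.sumCongr_apply, Sum.map, permCongr_perm_symm]


open scoped Classical in
/-- The block subgroup `G_λ = ∏_j G_{λ_j}(G,H)` of block-diagonal monomial matrices,
where the blocks are the fibers of `bl : Fin n → ι` (so `λ_j` is the size of the
fiber over `j`): permutations must preserve each block, and the product of the
entries in each block must lie in `H`. -/
def blockSubgroupH {n : ℕ} {G : Type*} [CommGroup G] (H : Subgroup G)
    {ι : Type*} (bl : Fin n → ι) : Subgroup (Wreath (Fin n) G) where
  carrier := {w | (∀ i, bl (w.right i) = bl i) ∧
    ∀ j : ι, (∏ i, if bl i = j then w.left i else 1) ∈ H}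
  one_mem' := by
    refine ⟨fun i => rfl, fun j => ?_⟩
    simpa using H.one_mem
  mul_mem' := by
    rintro a b ⟨ha1, ha2⟩ ⟨hb1, hb2⟩
    have hperm : ∀ i, bl (a.right i) = bl i := ha1
    refine ⟨fun i => ?_, fun j => ?_⟩
    · have : (a * b).right i = a.right (b.right i) := rfl
      rw [this, ha1, hb1]
    · have hsplit : (∏ i, if bl i = j then (a * b).left i else 1)
          = (∏ i, if bl i = j then a.left i else 1) *
            ∏ i, if bl i = j then b.left (a.right.symm i) else 1 := by
        rw [← Finset.prod_mul_distrib]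
        refine Finset.prod_congr rfl fun i _ => ?_
        by_cases h : bl i = j <;>
          simp [h, mul_left, permAut_apply]
      have hre : (∏ i, if bl i = j then b.left (a.right.symm i) else 1)
          = ∏ i, if bl i = j then b.left i else 1 := by
        refine Fintype.prod_equiv a.right.symm _ _ fun i => ?_
        have : bl (a.right.symm i) = bl i := by
          conv_rhs => rw [← a.right.apply_symm_apply i, ha1]
        rw [this]
      rw [hsplit, hre]
      exact H.mul_mem (ha2 j) (hb2 j)
  inv_mem' := by
    rintro a ⟨ha1, ha2⟩
    have hsymm : ∀ i, bl (a.right.symm i) = bl i := fun i => by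
      conv_rhs => rw [← a.right.apply_symm_apply i, ha1]
    refine ⟨fun i => ?_, fun j => ?_⟩
    · have : a⁻¹.right i = a.right.symm i := rfl
      rw [this, hsymm]
    · have hinv : ∀ i, a⁻¹.left i = (a.left (a.right i))⁻¹ := fun i => by
        rw [SemidirectProduct.inv_left]; rfl
      have : (∏ i, if bl i = j then a⁻¹.left i else 1)
          = (∏ i, if bl i = j then a.left i else 1)⁻¹ := by
        rw [← Finset.prod_inv_distrib]
        refine (Fintype.prod_equiv a.right _ _ fun i => ?_)
        rw [hinv]
        by_cases h : bl i = j
        · rw [if_pos h, if_pos (by rw [ha1, h])]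
        · rw [if_neg h, if_neg (by rw [ha1]; exact h), inv_one]
      rw [this]
      exact H.inv_mem (ha2 j)


open scoped TensorProduct

section Block19

variable {n k : ℕ} {G : Type*} [CommGroup G] (c : Fin n → Fin k)

lemma blockSubgroupH_right_eq {H : Subgroup G} {ι : Type*} {bl : Fin n → ι}
    (w : ↥(blockSubgroupH H bl)) (i : Fin n) : bl (w.1.right i) = bl i := w.2.1 i

/-- The permutation of the block `c⁻¹(j)` induced by a block-preserving element. -/
def blockPerm (w : ↥(blockSubgroupH (⊤ : Subgroup G) c)) (j : Fin k) :
    Equiv.Perm {i : Fin n // c i = j} :=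
  w.1.right.subtypePerm (fun i => by rw [blockSubgroupH_right_eq w i])

/-- The representation `⊠_j Φ_{l_j}(π_j)` of the block subgroup `∏_j S_{λ_j}[G]`:
the external tensor product over the blocks `j` of the pullback of `π_j` along the
projection to the symmetric group of the block, twisted by the character `l_j`
applied to the entries in block `j`. -/
noncomputable def blockRep (l : Fin k → (G →* ℂˣ)) (V : Fin k → Type*)
    [∀ j, AddCommGroup (V j)] [∀ j, Module ℂ (V j)]
    (π : ∀ j, Representation ℂ (Equiv.Perm {i : Fin n // c i = j}) (V j)) :
    Representation ℂ ↥(blockSubgroupH (⊤ : Subgroup G) c) (⨂[ℂ] j, V j) where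
  toFun w := (∏ i, (l (c i) (w.1.left i) : ℂ)) •
    PiTensorProduct.map (fun j => π j (blockPerm c w j))
  map_one' := by
    have h1 : ∀ j, blockPerm c (1 : ↥(blockSubgroupH (⊤ : Subgroup G) c)) j = 1 :=
      fun j => Equiv.Perm.subtypePerm_one _ _
    simp only [h1]
    simp [PiTensorProduct.map_one]
  map_mul' w w' := by
    have hb : ∀ j, blockPerm c (w * w') j = blockPerm c w j * blockPerm c w' j := by
      intro j
      ext x
      rfl
    have hmap : PiTensorProduct.map (fun j => π j (blockPerm c (w * w') j))
        = (PiTensorProduct.map fun j => π j (blockPerm c w j)) ∘ₗ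
          (PiTensorProduct.map fun j => π j (blockPerm c w' j)) := by
      rw [← PiTensorProduct.map_comp]
      congr 1
      funext j
      rw [hb j, map_mul]
      rfl
    have hscal : (∏ i, (l (c i) ((w * w').1.left i) : ℂ))
        = (∏ i, (l (c i) (w.1.left i) : ℂ)) * ∏ i, (l (c i) (w'.1.left i) : ℂ) := by
      have : ∀ i, (w * w').1.left i = w.1.left i * w'.1.left (w.1.right.symm i) := by
        intro i; rfl
      simp only [this, map_mul, Units.val_mul, Finset.prod_mul_distrib]
      congr 1
      refine Fintype.prod_equiv w.1.right.symm _ _ fun i => ?_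
      have : c (w.1.right.symm i) = c i := by
        conv_rhs => rw [← w.1.right.apply_symm_apply i, blockSubgroupH_right_eq w]
      rw [this]
    try dsimp only
    rw [hmap, hscal, Module.End.mul_eq_comp, LinearMap.smul_comp, LinearMap.comp_smul,
      smul_smul]

end Block19

/-- The space of the representation induced from a representation `ρ` of a
subgroup `K` of `Γ`: functions `f : Γ → V` with `f (k * g) = ρ k (f g)`. -/
def IndV {Γ : Type*} [Group Γ] (K : Subgroup Γ) {V : Type*} [AddCommGroup V]
    [Module ℂ V] (ρ : Representation ℂ ↥K V) : Submodule ℂ (Γ → V) where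
  carrier := {f | ∀ (x : ↥K) (g : Γ), f (↑x * g) = ρ x (f g)}
  zero_mem' := by intro x g; simp
  add_mem' := by intro f f' hf hf' x g; simp [hf x g, hf' x g]
  smul_mem' := by intro a f hf x g; simp [hf x g]

/-- The representation of `Γ` induced from the representation `ρ` of the
subgroup `K`, with `Γ` acting by right translation. -/
def IndRep {Γ : Type*} [Group Γ] (K : Subgroup Γ) {V : Type*} [AddCommGroup V]
    [Module ℂ V] (ρ : Representation ℂ ↥K V) : Representation ℂ Γ ↥(IndV K ρ) where
  toFun g :=
    { toFun := fun f => ⟨fun x => f.1 (x * g), fun y x => by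
        simpa [mul_assoc] using f.2 y (x * g)⟩
      map_add' := fun f f' => by ext x; rfl
      map_smul' := fun a f => by ext x; rfl }
  map_one' := by ext f x; simp
  map_mul' g g' := by
    ext f x
    show f.1 (x * (g * g')) = f.1 (x * g * g')
    rw [mul_assoc]

/-- Transport of permutations along an equivalence, as a group homomorphism. -/
def permCongrHom {α β : Type*} (e : α ≃ β) : Equiv.Perm α →* Equiv.Perm β where
  toFun := e.permCongr
  map_one' := by ext x; simp
  map_mul' p q := by ext x; simp


/-- the character `l^{⊗n}` of the diagonal `H^n` is invariant under
conjugation by `G_n(G,H)`, and extends to a one-dimensional representation of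
`G_n(G,H)` that is trivial on a set of coset representatives of `H^n` coming from
`G_n(G/H,1)`. -/
theorem statement8 (n : ℕ) (G : Type) [CommGroup G] [Finite G] (H : Subgroup G)
    (l : ↥H →* ℂˣ) :
    (∀ (w : ↥(GnSubgroup n G H)) (h h' : Fin n → ↥H),
        w * diagGn H h * w⁻¹ = diagGn H h' → tensorChar l h' = tensorChar l h) ∧
    ∃ χ : ↥(GnSubgroup n G H) →* ℂˣ,
      (∀ h : Fin n → ↥H, χ (diagGn H h) = tensorChar l h) ∧
      ∃ s : ↥(GnSubgroup n (G ⧸ H) ⊥) → ↥(GnSubgroup n G H),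
        (∀ x, phiGn n G H (s x) = x) ∧ ∀ x, χ (s x) = 1 := by
  classical
  set χ : ↥(GnSubgroup n G H) →* ℂˣ :=
    l.comp (((entryProd (Fin n) G).comp (GnSubgroup n G H).subtype).codRestrict H
      (fun w => w.2)) with hχ
  have hdiag : ∀ h : Fin n → ↥H, χ (diagGn H h) = tensorChar l h := by
    intro h
    have h1 : (((entryProd (Fin n) G).comp (GnSubgroup n G H).subtype).codRestrict H
        (fun w => w.2)) (diagGn H h) = ∏ i, h i := by
      apply Subtype.ext
      push_cast
      simp [entryProd, entryProdFun, diagGn, MonoidHom.codRestrict, diagW_left]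
    show l _ = _
    rw [h1, map_prod]
    rfl
  constructor
  · intro w h h' hc
    calc tensorChar l h' = χ (diagGn H h') := (hdiag h').symm
      _ = χ w * χ (diagGn H h) * (χ w)⁻¹ := by rw [← hc]; simp
      _ = χ (diagGn H h) := by rw [mul_comm (χ w), mul_assoc]; simp
      _ = tensorChar l h := hdiag h
  refine ⟨χ, hdiag, ?_⟩
  have hχval : ∀ (w : ↥(GnSubgroup n G H)), (∏ i, w.1.left i) = 1 → χ w = 1 := by
    intro w hw
    show l ⟨∏ i, w.1.left i, w.2⟩ = 1
    rw [show (⟨∏ i, w.1.left i, w.2⟩ : ↥H) = 1 from Subtype.ext hw, map_one]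
  cases n with
  | zero =>
    refine ⟨fun _ => 1, fun x => ?_, fun x => map_one χ⟩
    apply Subtype.ext
    apply SemidirectProduct.ext
    · funext i; exact i.elim0
    · apply Equiv.ext; intro i; exact i.elim0
  | succ m =>
    set a : ∀ _ : ↥(GnSubgroup (m+1) (G ⧸ H) ⊥), Fin (m+1) → G :=
      fun x i => (x.1.left i).out with ha
    have hp : ∀ x, (∏ i, a x i) ∈ H := by
      intro x
      have := x.2
      rw [mem_GnSubgroup, Subgroup.mem_bot] at this
      rw [← QuotientGroup.eq_one_iff, ← this]
      rw [show ((∏ i, a x i : G) : G ⧸ H) = ∏ i, ((a x i : G) : G ⧸ H) by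
        exact map_prod (QuotientGroup.mk' H) _ _]
      exact Finset.prod_congr rfl fun i _ => QuotientGroup.out_eq' _
    set wl : ∀ _ : ↥(GnSubgroup (m+1) (G ⧸ H) ⊥), Wreath (Fin (m+1)) G :=
      fun x => ⟨fun i => (if i = 0 then (∏ j, a x j)⁻¹ else 1) * a x i, x.1.right⟩ with hwl
    have hprod : ∀ x, (∏ i, (wl x).left i) = 1 := by
      intro x
      show (∏ i, (if i = 0 then (∏ j, a x j)⁻¹ else 1) * a x i) = 1
      rw [Finset.prod_mul_distrib, Finset.prod_ite_eq' Finset.univ (0 : Fin (m+1))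
        (fun _ => (∏ j, a x j)⁻¹)]
      simp
    have hmem : ∀ x, wl x ∈ GnSubgroup (m+1) G H := by
      intro x; rw [mem_GnSubgroup, hprod]; exact H.one_mem
    refine ⟨fun x => ⟨wl x, hmem x⟩, fun x => ?_, fun x => hχval _ (hprod x)⟩
    apply Subtype.ext
    apply SemidirectProduct.ext
    · funext i
      show QuotientGroup.mk' H ((wl x).left i) = x.1.left i
      show QuotientGroup.mk' H ((if i = 0 then (∏ j, a x j)⁻¹ else 1) * a x i) = x.1.left i
      rw [map_mul]
      have h2 : QuotientGroup.mk' H (a x i) = x.1.left i := QuotientGroup.out_eq' _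
      by_cases h : i = 0
      · rw [if_pos h, map_inv]
        rw [show QuotientGroup.mk' H (∏ j, a x j) = 1 from
          (QuotientGroup.eq_one_iff _).mpr (hp x)]
        rw [inv_one, one_mul, h2]
      · rw [if_neg h, map_one, one_mul, h2]
    · rfl
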